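/- arXiv:2305.07247 — 5 statements merged into one kernel-verified Lean document; each statement's English description precedes it below -/
import Mathlib

section
/- (Lemma, iterative identity, even index.) For every k ≥ 1, the KL divergence between consecutive aIPF couplings satisfies the exact identity KL(π_{2k} | π_{2k−1}) = ∫_{ℝ^d} [ ψ_k(y) + log(dν⋆,k/dy)(y) − ψ_{k−1}(y) − log(dν⋆,k−1/dy)(y) ] ν⋆,k(dy). -/
open MeasureTheory Real RealInnerProductSpace

/-- Kullback–Leibler divergence (real-valued; all KL divergences appearing in the
statements are assumed finite). -/
noncomputable def KL {E : Type*} [MeasurableSpace E] (P Q : Measure E) : ℝ :=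
  ∫ x, Real.log ((P.rnDeriv Q x).toReal) ∂P

/-- Euclidean space `ℝ^d`. -/
abbrev Euc (d : ℕ) := EuclideanSpace ℝ (Fin d)


open ENNReal in
lemma prod_withDensity_right' {α β : Type*} [MeasurableSpace α] [MeasurableSpace β]
    (μ : Measure α) (ν : Measure β) [SigmaFinite μ] [SigmaFinite ν]
    {g : β → ℝ≥0∞} (hg : Measurable g) [SigmaFinite (ν.withDensity g)] :
    μ.prod (ν.withDensity g) = (μ.prod ν).withDensity (fun p => g p.2) := by
  refine Measure.prod_eq fun s t hs ht => ?_
  rw [withDensity_apply _ (hs.prod ht), ← Measure.prod_restrict,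
    MeasureTheory.lintegral_prod (fun p => g p.2) ((hg.comp measurable_snd).aemeasurable),
    withDensity_apply _ ht]
  simp only [lintegral_const, Measure.restrict_apply_univ]
  rw [mul_comm]

/-- Lemma: iterative identity for consecutive aIPF couplings, even index. -/
theorem aipf_iterative_identity_even
    (d : ℕ) (hd : 1 ≤ d)
    (c : Euc d × Euc d → ℝ) (hc : Measurable c)
    -- marginal targets `μ⋆, ν⋆` with smooth everywhere-positive densities
    (pμ pν : Euc d → ℝ)
    (hpμ_smooth : ContDiff ℝ (⊤ : ℕ∞) pμ) (hpν_smooth : ContDiff ℝ (⊤ : ℕ∞) pν)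
    (hpμ_pos : ∀ x, 0 < pμ x) (hpν_pos : ∀ x, 0 < pν x)
    (μstar νstar : Measure (Euc d))
    (hμstar : μstar = volume.withDensity (fun x => ENNReal.ofReal (pμ x)))
    (hνstar : νstar = volume.withDensity (fun x => ENNReal.ofReal (pν x)))
    (hμstar_prob : IsProbabilityMeasure μstar) (hνstar_prob : IsProbabilityMeasure νstar)
    -- approximate projections `μ⋆,k, ν⋆,k` with smooth everywhere-positive densities
    (pμa pνa : ℕ → Euc d → ℝ)
    (hpμa_smooth : ∀ k, ContDiff ℝ (⊤ : ℕ∞) (pμa k)) (hpνa_smooth : ∀ k, ContDiff ℝ (⊤ : ℕ∞) (pνa k))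
    (hpμa_pos : ∀ k x, 0 < pμa k x) (hpνa_pos : ∀ k x, 0 < pνa k x)
    (μa νa : ℕ → Measure (Euc d))
    (hμa : ∀ k, μa k = volume.withDensity (fun x => ENNReal.ofReal (pμa k x)))
    (hνa : ∀ k, νa k = volume.withDensity (fun x => ENNReal.ofReal (pνa k x)))
    (hμa_prob : ∀ k, IsProbabilityMeasure (μa k)) (hνa_prob : ∀ k, IsProbabilityMeasure (νa k))
    -- Gibbs measure `G` with density `e^{-c}/Z` w.r.t. `μ⋆ ⊗ ν⋆`
    (Z : ℝ) (hZ : Z = ∫ p, Real.exp (-(c p)) ∂(μstar.prod νstar)) (hZ_pos : 0 < Z)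
    (G : Measure (Euc d × Euc d))
    (hG : G = (μstar.prod νstar).withDensity (fun p => ENNReal.ofReal (Real.exp (-(c p)) / Z)))
    (hG_prob : IsProbabilityMeasure G)
    -- `π⋆` : minimizer of `KL(· | G)` over couplings of `(μ⋆, ν⋆)`
    (ρstar : Measure (Euc d × Euc d)) (hρstar_prob : IsProbabilityMeasure ρstar)
    (hρstar_fst : ρstar.map Prod.fst = μstar) (hρstar_snd : ρstar.map Prod.snd = νstar)
    (hρstar_min : ∀ ρ' : Measure (Euc d × Euc d), IsProbabilityMeasure ρ' →
      ρ'.map Prod.fst = μstar → ρ'.map Prod.snd = νstar → KL ρstar G ≤ KL ρ' G)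
    -- aIPF potentials `φ_k, ψ_k`
    (φ ψ : ℕ → Euc d → ℝ)
    (hφ0 : ∀ x, φ 0 x = 0)
    (hψ_int : ∀ k y, Integrable (fun x => Real.exp (φ k x - c (x, y))) (μa k))
    (hψ_pos : ∀ k y, 0 < ∫ x, Real.exp (φ k x - c (x, y)) ∂(μa k))
    (hψ : ∀ k y, ψ k y = - Real.log (∫ x, Real.exp (φ k x - c (x, y)) ∂(μa k)))
    (hφ_int : ∀ k x, Integrable (fun y => Real.exp (ψ k y - c (x, y))) (νa k))
    (hφ_pos : ∀ k x, 0 < ∫ y, Real.exp (ψ k y - c (x, y)) ∂(νa k))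
    (hφ : ∀ k x, φ (k + 1) x = - Real.log (∫ y, Real.exp (ψ k y - c (x, y)) ∂(νa k)))
    -- aIPF couplings `π_j` (indexed by `ℤ`, with `π_{-1} = G`)
    (ρ : ℤ → Measure (Euc d × Euc d))
    (hρ_neg : ρ (-1) = G)
    (hρ_even : ∀ k : ℕ, ρ (2 * k) = ((μa k).prod (νa k)).withDensity
      (fun p => ENNReal.ofReal (Real.exp (φ k p.1 + ψ k p.2 - c p))))
    (hρ_odd : ∀ k : ℕ, ρ (2 * k + 1) = ((μa (k + 1)).prod (νa k)).withDensity
      (fun p => ENNReal.ofReal (Real.exp (φ (k + 1) p.1 + ψ k p.2 - c p))))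
    (hρ_prob : ∀ k : ℕ, IsProbabilityMeasure (ρ k)) :
    ∀ k : ℕ, 1 ≤ k →
      KL (ρ (2 * k)) (ρ (2 * (k : ℤ) - 1)) =
        ∫ y, (ψ k y + Real.log (pνa k y) - ψ (k - 1) y - Real.log (pνa (k - 1) y)) ∂(νa k) := by

  intro k hk
  obtain ⟨m, rfl⟩ : ∃ m, k = m + 1 := ⟨k - 1, (Nat.succ_pred_eq_of_pos hk).symm⟩
  simp only [Nat.add_sub_cancel]
  have hidx : (2 * ((m + 1 : ℕ) : ℤ) - 1) = 2 * (m : ℤ) + 1 := by push_cast; ring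
  rw [hidx]
  haveI hμp := hμa_prob (m + 1)
  haveI hνp := hνa_prob (m + 1)
  haveI hνp' := hνa_prob m
  -- measurability of the potentials
  have hmeas : ∀ n, Measurable (φ n) ∧ Measurable (ψ n) := by
    have key : ∀ n, Measurable (φ n) → Measurable (ψ n) := by
      intro n hφn
      haveI := hμa_prob n
      have hint : StronglyMeasurable (fun p : Euc d × Euc d => Real.exp (φ n p.1 - c p)) :=
        (Real.measurable_exp.comp ((hφn.comp measurable_fst).sub hc)).stronglyMeasurable
      have hI : StronglyMeasurable (fun y => ∫ x, Real.exp (φ n x - c (x, y)) ∂(μa n)) :=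
        hint.integral_prod_left'
      have hψeq : ψ n = fun y => - Real.log (∫ x, Real.exp (φ n x - c (x, y)) ∂(μa n)) :=
        funext (hψ n)
      rw [hψeq]
      exact (Real.measurable_log.comp hI.measurable).neg
    intro n
    induction n with
    | zero =>
      have h0 : Measurable (φ 0) := by
        have : φ 0 = fun _ => 0 := funext hφ0
        rw [this]; exact measurable_const
      exact ⟨h0, key 0 h0⟩
    | succ n ih =>
      have hψn := ih.2
      haveI := hνa_prob n
      have hint : StronglyMeasurable (fun p : Euc d × Euc d => Real.exp (ψ n p.2 - c p)) :=
        (Real.measurable_exp.comp ((hψn.comp measurable_snd).sub hc)).stronglyMeasurable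
      have hI : StronglyMeasurable (fun x => ∫ y, Real.exp (ψ n y - c (x, y)) ∂(νa n)) :=
        hint.integral_prod_right'
      have hφs : Measurable (φ (n + 1)) := by
        have : φ (n + 1) = fun x => - Real.log (∫ y, Real.exp (ψ n y - c (x, y)) ∂(νa n)) :=
          funext (hφ n)
        rw [this]; exact (Real.measurable_log.comp hI.measurable).neg
      exact ⟨hφs, key (n + 1) hφs⟩
  obtain ⟨hφm, hψm⟩ := hmeas (m + 1)
  have hψm' : Measurable (ψ m) := (hmeas m).2
  have hpν1 : Measurable (pνa (m + 1)) := (hpνa_smooth (m + 1)).continuous.measurable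
  have hpν0 : Measurable (pνa m) := (hpνa_smooth m).continuous.measurable
  -- measurability of the densities
  have hFmeas : Measurable (fun p : Euc d × Euc d =>
      ENNReal.ofReal (Real.exp (φ (m + 1) p.1 + ψ (m + 1) p.2 - c p))) :=
    ENNReal.measurable_ofReal.comp (Real.measurable_exp.comp
      (((hφm.comp measurable_fst).add (hψm.comp measurable_snd)).sub hc))
  have hGdmeas : Measurable (fun p : Euc d × Euc d =>
      ENNReal.ofReal (Real.exp (φ (m + 1) p.1 + ψ m p.2 - c p))) :=
    ENNReal.measurable_ofReal.comp (Real.measurable_exp.comp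
      (((hφm.comp measurable_fst).add (hψm'.comp measurable_snd)).sub hc))
  have hrmeas : Measurable (fun p : Euc d × Euc d =>
      ENNReal.ofReal (Real.exp (ψ (m + 1) p.2 - ψ m p.2) * (pνa (m + 1) p.2 / pνa m p.2))) :=
    ENNReal.measurable_ofReal.comp
      ((Real.measurable_exp.comp ((hψm.comp measurable_snd).sub (hψm'.comp measurable_snd))).mul
        ((hpν1.comp measurable_snd).div (hpν0.comp measurable_snd)))
  have hratio_meas : Measurable (fun y : Euc d => ENNReal.ofReal (pνa (m + 1) y / pνa m y)) :=
    ENNReal.measurable_ofReal.comp (hpν1.div hpν0)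
  -- the second-index measure as a density over the previous one
  have hν_wd : νa (m + 1) =
      (νa m).withDensity (fun y => ENNReal.ofReal (pνa (m + 1) y / pνa m y)) := by
    have hg0 : Measurable (fun y : Euc d => ENNReal.ofReal (pνa m y)) := hpν0.ennreal_ofReal
    rw [hνa (m + 1), hνa m, ← withDensity_mul _ hg0 hratio_meas]
    congr 1
    funext y
    rw [Pi.mul_apply, ← ENNReal.ofReal_mul (le_of_lt (hpνa_pos m y))]
    congr 1
    rw [mul_comm, div_mul_cancel₀ _ (hpνa_pos m y).ne']
  haveI hsf : SigmaFinite ((νa m).withDensity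
      (fun y => ENNReal.ofReal (pνa (m + 1) y / pνa m y))) := by
    rw [← hν_wd]; infer_instance
  have hprod : (μa (m + 1)).prod (νa (m + 1)) =
      ((μa (m + 1)).prod (νa m)).withDensity
        (fun p => ENNReal.ofReal (pνa (m + 1) p.2 / pνa m p.2)) := by
    rw [hν_wd]
    exact prod_withDensity_right' _ _ hratio_meas
  -- A = B.withDensity r
  have hratio_snd : Measurable (fun p : Euc d × Euc d =>
      ENNReal.ofReal (pνa (m + 1) p.2 / pνa m p.2)) := hratio_meas.comp measurable_snd
  have hAB : ρ (2 * ((m + 1 : ℕ) : ℤ)) = (ρ (2 * (m : ℤ) + 1)).withDensity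
      (fun p => ENNReal.ofReal
        (Real.exp (ψ (m + 1) p.2 - ψ m p.2) * (pνa (m + 1) p.2 / pνa m p.2))) := by
    rw [hρ_even (m + 1), hρ_odd m, hprod,
      ← withDensity_mul _ hratio_snd hFmeas,
      ← withDensity_mul _ hGdmeas hrmeas]
    congr 1
    funext p
    simp only [Pi.mul_apply, Function.comp_apply]
    rw [← ENNReal.ofReal_mul (le_of_lt (div_pos (hpνa_pos (m + 1) p.2) (hpνa_pos m p.2))),
      ← ENNReal.ofReal_mul (le_of_lt (Real.exp_pos _))]
    congr 1
    rw [← mul_assoc, ← Real.exp_add, mul_comm]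
    congr 2
    ring
  -- probability instances
  have hcastB : ((2 * m + 1 : ℕ) : ℤ) = 2 * (m : ℤ) + 1 := by push_cast; ring
  haveI hBprob : IsProbabilityMeasure (ρ (2 * (m : ℤ) + 1)) := by
    have := hρ_prob (2 * m + 1); rwa [hcastB] at this
  have hcastA : ((2 * (m + 1) : ℕ) : ℤ) = 2 * ((m + 1 : ℕ) : ℤ) := by push_cast; ring
  haveI hAprob : IsProbabilityMeasure (ρ (2 * ((m + 1 : ℕ) : ℤ))) := by
    have := hρ_prob (2 * (m + 1)); rwa [hcastA] at this
  -- Radon–Nikodym derivative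
  have hrn : (ρ (2 * ((m + 1 : ℕ) : ℤ))).rnDeriv (ρ (2 * (m : ℤ) + 1))
      =ᵐ[ρ (2 * (m : ℤ) + 1)]
      (fun p => ENNReal.ofReal
        (Real.exp (ψ (m + 1) p.2 - ψ m p.2) * (pνa (m + 1) p.2 / pνa m p.2))) := by
    rw [hAB]
    exact Measure.rnDeriv_withDensity _ hrmeas
  have hac : ρ (2 * ((m + 1 : ℕ) : ℤ)) ≪ ρ (2 * (m : ℤ) + 1) := by
    rw [hAB]; exact withDensity_absolutelyContinuous _ _
  have hrnA : (ρ (2 * ((m + 1 : ℕ) : ℤ))).rnDeriv (ρ (2 * (m : ℤ) + 1))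
      =ᵐ[ρ (2 * ((m + 1 : ℕ) : ℤ))]
      (fun p => ENNReal.ofReal
        (Real.exp (ψ (m + 1) p.2 - ψ m p.2) * (pνa (m + 1) p.2 / pνa m p.2))) :=
    hrn.filter_mono hac.ae_le
  -- the second marginal of A is νa (m+1)
  have hmap : (ρ (2 * ((m + 1 : ℕ) : ℤ))).map Prod.snd = νa (m + 1) := by
    ext s hs
    rw [Measure.map_apply measurable_snd hs, hρ_even (m + 1),
      withDensity_apply _ (measurable_snd hs)]
    have hpre : (Prod.snd ⁻¹' s : Set (Euc d × Euc d)) = Set.univ ×ˢ s := by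
      ext p; simp
    rw [hpre, ← Measure.prod_restrict, Measure.restrict_univ,
      MeasureTheory.lintegral_prod_symm _ hFmeas.aemeasurable]
    have hinner : ∀ y, (∫⁻ x, ENNReal.ofReal
        (Real.exp (φ (m + 1) x + ψ (m + 1) y - c (x, y))) ∂(μa (m + 1))) = 1 := by
      intro y
      have hint : Integrable
          (fun x => Real.exp (φ (m + 1) x - c (x, y)) * Real.exp (ψ (m + 1) y))
          (μa (m + 1)) := (hψ_int (m + 1) y).mul_const _
      calc ∫⁻ x, ENNReal.ofReal (Real.exp (φ (m + 1) x + ψ (m + 1) y - c (x, y))) ∂(μa (m + 1))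
          = ∫⁻ x, ENNReal.ofReal
              (Real.exp (φ (m + 1) x - c (x, y)) * Real.exp (ψ (m + 1) y)) ∂(μa (m + 1)) := by
            refine lintegral_congr fun x => ?_
            rw [← Real.exp_add]
            congr 2
            ring
        _ = ENNReal.ofReal (∫ x, Real.exp (φ (m + 1) x - c (x, y)) *
              Real.exp (ψ (m + 1) y) ∂(μa (m + 1))) :=
            (MeasureTheory.ofReal_integral_eq_lintegral_ofReal hint
              (Filter.Eventually.of_forall fun x =>
                (mul_pos (Real.exp_pos _) (Real.exp_pos _)).le)).symm
        _ = 1 := by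
            rw [integral_mul_const, hψ (m + 1) y, Real.exp_neg,
              Real.exp_log (hψ_pos (m + 1) y),
              mul_inv_cancel₀ (hψ_pos (m + 1) y).ne']
            exact ENNReal.ofReal_one
    calc ∫⁻ y, ∫⁻ x, ENNReal.ofReal
          (Real.exp (φ (m + 1) (x, y).1 + ψ (m + 1) (x, y).2 - c (x, y))) ∂(μa (m + 1))
          ∂((νa (m + 1)).restrict s)
        = ∫⁻ _, 1 ∂((νa (m + 1)).restrict s) := lintegral_congr fun y => hinner y
      _ = νa (m + 1) s := by rw [lintegral_one, Measure.restrict_apply_univ]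
  -- measurability of the integrand
  have hhmeas : Measurable (fun y : Euc d =>
      ψ (m + 1) y + Real.log (pνa (m + 1) y) - ψ m y - Real.log (pνa m y)) :=
    ((hψm.add (Real.measurable_log.comp hpν1)).sub hψm').sub (Real.measurable_log.comp hpν0)
  -- final computation
  show ∫ p, Real.log (((ρ (2 * ((m + 1 : ℕ) : ℤ))).rnDeriv (ρ (2 * (m : ℤ) + 1)) p).toReal)
      ∂(ρ (2 * ((m + 1 : ℕ) : ℤ))) = _
  calc ∫ p, Real.log (((ρ (2 * ((m + 1 : ℕ) : ℤ))).rnDeriv (ρ (2 * (m : ℤ) + 1)) p).toReal)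
        ∂(ρ (2 * ((m + 1 : ℕ) : ℤ)))
      = ∫ p, Real.log ((ENNReal.ofReal
          (Real.exp (ψ (m + 1) p.2 - ψ m p.2) * (pνa (m + 1) p.2 / pνa m p.2))).toReal)
          ∂(ρ (2 * ((m + 1 : ℕ) : ℤ))) := by
        refine integral_congr_ae (hrnA.mono fun p hp => ?_)
        dsimp only
        rw [hp]
    _ = ∫ p, (ψ (m + 1) p.2 + Real.log (pνa (m + 1) p.2) - ψ m p.2 - Real.log (pνa m p.2))
          ∂(ρ (2 * ((m + 1 : ℕ) : ℤ))) := by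
        refine integral_congr_ae (Filter.Eventually.of_forall fun p => ?_)
        dsimp only
        have h1 : (0:ℝ) < Real.exp (ψ (m + 1) p.2 - ψ m p.2) * (pνa (m + 1) p.2 / pνa m p.2) :=
          mul_pos (Real.exp_pos _) (div_pos (hpνa_pos _ _) (hpνa_pos _ _))
        rw [ENNReal.toReal_ofReal h1.le,
          Real.log_mul (Real.exp_pos _).ne'
            (div_pos (hpνa_pos _ _) (hpνa_pos _ _)).ne',
          Real.log_exp,
          Real.log_div (hpνa_pos _ _).ne' (hpνa_pos _ _).ne']
        ring
    _ = ∫ y, (ψ (m + 1) y + Real.log (pνa (m + 1) y) - ψ m y - Real.log (pνa m y))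
          ∂((ρ (2 * ((m + 1 : ℕ) : ℤ))).map Prod.snd) :=
        (integral_map measurable_snd.aemeasurable hhmeas.aestronglyMeasurable).symm
    _ = ∫ y, (ψ (m + 1) y + Real.log (pνa (m + 1) y) - ψ m y - Real.log (pνa m y))
          ∂(νa (m + 1)) := by rw [hmap]
end

section
/- (Lemma, iterative identity, odd index.) For every k ≥ 0, the KL divergence between consecutive aIPF couplings satisfies the exact identity KL(π_{2k+1} | π_{2k}) = ∫_{ℝ^d} [ φ_{k+1}(x) + log(dμ⋆,k+1/dx)(x) − φ_k(x) − log(dμ⋆,k/dx)(x) ] μ⋆,k+1(dx). -/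
open MeasureTheory Real RealInnerProductSpace

open scoped ENNReal

lemma prodWithDensityAux {α β : Type*} [MeasurableSpace α] [MeasurableSpace β]
    (μ : Measure α) (ν : Measure β) [SigmaFinite μ] [SigmaFinite ν]
    {f : α → ℝ≥0∞} {g : β → ℝ≥0∞} (hf : Measurable f) (hg : Measurable g)
    [SigmaFinite (μ.withDensity f)] [SigmaFinite (ν.withDensity g)] :
    (μ.withDensity f).prod (ν.withDensity g)
      = (μ.prod ν).withDensity (fun p => f p.1 * g p.2) := by
  refine Measure.prod_eq fun s t hs ht => ?_
  rw [withDensity_apply _ (hs.prod ht), ← Measure.prod_restrict,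
    lintegral_prod (fun p => f p.1 * g p.2)
      ((hf.comp measurable_fst).mul (hg.comp measurable_snd)).aemeasurable]
  simp only
  calc ∫⁻ x, ∫⁻ y, f x * g y ∂ν.restrict t ∂μ.restrict s
      = ∫⁻ x, f x * ∫⁻ y, g y ∂ν.restrict t ∂μ.restrict s := by
        refine lintegral_congr fun x => lintegral_const_mul _ hg
    _ = (∫⁻ x, f x ∂μ.restrict s) * ∫⁻ y, g y ∂ν.restrict t := lintegral_mul_const _ hf
    _ = _ := by rw [withDensity_apply _ hs, withDensity_apply _ ht]

lemma withDensityDivEq {α : Type*} [MeasurableSpace α] (μ : Measure α)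
    {f g : α → ℝ≥0∞} (hf : Measurable f) (hg : Measurable g)
    (hg0 : ∀ x, g x ≠ 0) (hgtop : ∀ x, g x ≠ ⊤) :
    (μ.withDensity g).withDensity (fun x => f x / g x) = μ.withDensity f := by
  rw [← withDensity_mul μ hg (g := fun x => f x / g x) (hf.div hg)]
  congr 1
  ext x
  exact ENNReal.mul_div_cancel (hg0 x) (hgtop x)

lemma mapFstWithDensity {α β : Type*} [MeasurableSpace α] [MeasurableSpace β]
    (μ : Measure α) (ν : Measure β) [SFinite μ] [SFinite ν]
    {f : α × β → ℝ≥0∞} (hf : Measurable f)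
    (h1 : ∀ x, ∫⁻ y, f (x, y) ∂ν = 1) :
    ((μ.prod ν).withDensity f).map Prod.fst = μ := by
  ext s hs
  rw [Measure.map_apply measurable_fst hs, withDensity_apply _ (measurable_fst hs)]
  have hset : (Prod.fst ⁻¹' s : Set (α × β)) = s ×ˢ Set.univ := by ext p; simp
  rw [hset, ← Measure.restrict_prod_eq_prod_univ, lintegral_prod f hf.aemeasurable]
  simp [h1]

/-- Lemma: iterative identity for consecutive aIPF couplings, odd index. -/
theorem aipf_iterative_identity_odd
    (d : ℕ) (hd : 1 ≤ d)
    (c : Euc d × Euc d → ℝ) (hc : Measurable c)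
    -- marginal targets `μ⋆, ν⋆` with smooth everywhere-positive densities
    (pμ pν : Euc d → ℝ)
    (hpμ_smooth : ContDiff ℝ (⊤ : ℕ∞) pμ) (hpν_smooth : ContDiff ℝ (⊤ : ℕ∞) pν)
    (hpμ_pos : ∀ x, 0 < pμ x) (hpν_pos : ∀ x, 0 < pν x)
    (μstar νstar : Measure (Euc d))
    (hμstar : μstar = volume.withDensity (fun x => ENNReal.ofReal (pμ x)))
    (hνstar : νstar = volume.withDensity (fun x => ENNReal.ofReal (pν x)))
    (hμstar_prob : IsProbabilityMeasure μstar) (hνstar_prob : IsProbabilityMeasure νstar)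
    -- approximate projections `μ⋆,k, ν⋆,k` with smooth everywhere-positive densities
    (pμa pνa : ℕ → Euc d → ℝ)
    (hpμa_smooth : ∀ k, ContDiff ℝ (⊤ : ℕ∞) (pμa k)) (hpνa_smooth : ∀ k, ContDiff ℝ (⊤ : ℕ∞) (pνa k))
    (hpμa_pos : ∀ k x, 0 < pμa k x) (hpνa_pos : ∀ k x, 0 < pνa k x)
    (μa νa : ℕ → Measure (Euc d))
    (hμa : ∀ k, μa k = volume.withDensity (fun x => ENNReal.ofReal (pμa k x)))
    (hνa : ∀ k, νa k = volume.withDensity (fun x => ENNReal.ofReal (pνa k x)))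
    (hμa_prob : ∀ k, IsProbabilityMeasure (μa k)) (hνa_prob : ∀ k, IsProbabilityMeasure (νa k))
    -- Gibbs measure `G` with density `e^{-c}/Z` w.r.t. `μ⋆ ⊗ ν⋆`
    (Z : ℝ) (hZ : Z = ∫ p, Real.exp (-(c p)) ∂(μstar.prod νstar)) (hZ_pos : 0 < Z)
    (G : Measure (Euc d × Euc d))
    (hG : G = (μstar.prod νstar).withDensity (fun p => ENNReal.ofReal (Real.exp (-(c p)) / Z)))
    (hG_prob : IsProbabilityMeasure G)
    -- `π⋆` : minimizer of `KL(· | G)` over couplings of `(μ⋆, ν⋆)`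
    (ρstar : Measure (Euc d × Euc d)) (hρstar_prob : IsProbabilityMeasure ρstar)
    (hρstar_fst : ρstar.map Prod.fst = μstar) (hρstar_snd : ρstar.map Prod.snd = νstar)
    (hρstar_min : ∀ ρ' : Measure (Euc d × Euc d), IsProbabilityMeasure ρ' →
      ρ'.map Prod.fst = μstar → ρ'.map Prod.snd = νstar → KL ρstar G ≤ KL ρ' G)
    -- aIPF potentials `φ_k, ψ_k`
    (φ ψ : ℕ → Euc d → ℝ)
    (hφ0 : ∀ x, φ 0 x = 0)
    (hψ_int : ∀ k y, Integrable (fun x => Real.exp (φ k x - c (x, y))) (μa k))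
    (hψ_pos : ∀ k y, 0 < ∫ x, Real.exp (φ k x - c (x, y)) ∂(μa k))
    (hψ : ∀ k y, ψ k y = - Real.log (∫ x, Real.exp (φ k x - c (x, y)) ∂(μa k)))
    (hφ_int : ∀ k x, Integrable (fun y => Real.exp (ψ k y - c (x, y))) (νa k))
    (hφ_pos : ∀ k x, 0 < ∫ y, Real.exp (ψ k y - c (x, y)) ∂(νa k))
    (hφ : ∀ k x, φ (k + 1) x = - Real.log (∫ y, Real.exp (ψ k y - c (x, y)) ∂(νa k)))
    -- aIPF couplings `π_j` (indexed by `ℤ`, with `π_{-1} = G`)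
    (ρ : ℤ → Measure (Euc d × Euc d))
    (hρ_neg : ρ (-1) = G)
    (hρ_even : ∀ k : ℕ, ρ (2 * k) = ((μa k).prod (νa k)).withDensity
      (fun p => ENNReal.ofReal (Real.exp (φ k p.1 + ψ k p.2 - c p))))
    (hρ_odd : ∀ k : ℕ, ρ (2 * k + 1) = ((μa (k + 1)).prod (νa k)).withDensity
      (fun p => ENNReal.ofReal (Real.exp (φ (k + 1) p.1 + ψ k p.2 - c p))))
    (hρ_prob : ∀ k : ℕ, IsProbabilityMeasure (ρ k)) :
    ∀ k : ℕ,
      KL (ρ (2 * k + 1)) (ρ (2 * k)) =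
        ∫ x, (φ (k + 1) x + Real.log (pμa (k + 1) x) - φ k x - Real.log (pμa k x))
          ∂(μa (k + 1)) := by
  intro k
  haveI hμ1 : IsProbabilityMeasure (μa (k+1)) := hμa_prob (k+1)
  haveI hμ0 : IsProbabilityMeasure (μa k) := hμa_prob k
  haveI hν0 : IsProbabilityMeasure (νa k) := hνa_prob k
  -- measurability of the potentials
  have stepψ : ∀ j, Measurable (φ j) → Measurable (ψ j) := by
    intro j hj
    haveI := hμa_prob j
    have hsm : StronglyMeasurable fun p : Euc d × Euc d => Real.exp (φ j p.1 - c p) :=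
      (Real.measurable_exp.comp ((hj.comp measurable_fst).sub hc)).stronglyMeasurable
    have hint : Measurable fun y => ∫ x, Real.exp (φ j x - c (x, y)) ∂(μa j) :=
      hsm.integral_prod_left'.measurable
    have heq : ψ j = fun y => - Real.log (∫ x, Real.exp (φ j x - c (x, y)) ∂(μa j)) :=
      funext (hψ j)
    rw [heq]; exact (Real.measurable_log.comp hint).neg
  have hmeas : ∀ j, Measurable (φ j) ∧ Measurable (ψ j) := by
    intro j
    induction j with
    | zero =>
        have hφ0m : Measurable (φ 0) := by
          have h : φ 0 = fun _ => 0 := funext hφ0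
          rw [h]; exact measurable_const
        exact ⟨hφ0m, stepψ 0 hφ0m⟩
    | succ n ih =>
        have hφm : Measurable (φ (n+1)) := by
          haveI := hνa_prob n
          have hsm : StronglyMeasurable fun p : Euc d × Euc d => Real.exp (ψ n p.2 - c p) :=
            (Real.measurable_exp.comp ((ih.2.comp measurable_snd).sub hc)).stronglyMeasurable
          have hint : Measurable fun x => ∫ y, Real.exp (ψ n y - c (x, y)) ∂(νa n) :=
            hsm.integral_prod_right'.measurable
          have heq : φ (n+1) = fun x => - Real.log (∫ y, Real.exp (ψ n y - c (x, y)) ∂(νa n)) :=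
            funext (hφ n)
          rw [heq]; exact (Real.measurable_log.comp hint).neg
        exact ⟨hφm, stepψ _ hφm⟩
  have hφm1 : Measurable (φ (k+1)) := (hmeas (k+1)).1
  have hφm0 : Measurable (φ k) := (hmeas k).1
  have hψm : Measurable (ψ k) := (hmeas k).2
  have he1 : Measurable fun p : Euc d × Euc d => Real.exp (φ (k+1) p.1 + ψ k p.2 - c p) :=
    Real.measurable_exp.comp (((hφm1.comp measurable_fst).add (hψm.comp measurable_snd)).sub hc)
  have he0 : Measurable fun p : Euc d × Euc d => Real.exp (φ k p.1 + ψ k p.2 - c p) :=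
    Real.measurable_exp.comp (((hφm0.comp measurable_fst).add (hψm.comp measurable_snd)).sub hc)
  -- first marginal of the odd coupling
  have hnorm : ∀ x, ∫⁻ y, ENNReal.ofReal (Real.exp (φ (k+1) x + ψ k y - c (x, y))) ∂(νa k)
      = 1 := by
    intro x
    have hI : 0 < ∫ y, Real.exp (ψ k y - c (x, y)) ∂(νa k) := hφ_pos k x
    have hmy : Measurable fun y => ENNReal.ofReal (Real.exp (ψ k y - c (x, y))) :=
      ENNReal.measurable_ofReal.comp
        (Real.measurable_exp.comp (hψm.sub (hc.comp measurable_prodMk_left)))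
    calc ∫⁻ y, ENNReal.ofReal (Real.exp (φ (k+1) x + ψ k y - c (x, y))) ∂(νa k)
        = ∫⁻ y, ENNReal.ofReal (Real.exp (φ (k+1) x))
            * ENNReal.ofReal (Real.exp (ψ k y - c (x, y))) ∂(νa k) := by
          refine lintegral_congr fun y => ?_
          rw [← ENNReal.ofReal_mul (Real.exp_nonneg _), ← Real.exp_add]
          ring_nf
      _ = ENNReal.ofReal (Real.exp (φ (k+1) x))
            * ∫⁻ y, ENNReal.ofReal (Real.exp (ψ k y - c (x, y))) ∂(νa k) :=
          lintegral_const_mul _ hmy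
      _ = ENNReal.ofReal (Real.exp (φ (k+1) x))
            * ENNReal.ofReal (∫ y, Real.exp (ψ k y - c (x, y)) ∂(νa k)) := by
          rw [← ofReal_integral_eq_lintegral_ofReal (hφ_int k x)
            (Filter.Eventually.of_forall fun y => (Real.exp_pos _).le)]
      _ = 1 := by
          rw [← ENNReal.ofReal_mul (Real.exp_nonneg _), hφ k x, Real.exp_neg,
            Real.exp_log hI, inv_mul_cancel₀ (ne_of_gt hI), ENNReal.ofReal_one]
  have hmapfst : (ρ (2*k+1)).map Prod.fst = μa (k+1) := by
    rw [hρ_odd k]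
    exact mapFstWithDensity _ _ (ENNReal.measurable_ofReal.comp he1) hnorm
  -- representation of both couplings over Lebesgue measure on the product
  set vol2 : Measure (Euc d × Euc d) := (volume : Measure (Euc d)).prod volume with hvol2
  set fP : Euc d × Euc d → ℝ≥0∞ := fun p =>
    ENNReal.ofReal (pμa (k+1) p.1) * ENNReal.ofReal (pνa k p.2)
      * ENNReal.ofReal (Real.exp (φ (k+1) p.1 + ψ k p.2 - c p)) with hfPdef
  set fQ : Euc d × Euc d → ℝ≥0∞ := fun p =>
    ENNReal.ofReal (pμa k p.1) * ENNReal.ofReal (pνa k p.2)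
      * ENNReal.ofReal (Real.exp (φ k p.1 + ψ k p.2 - c p)) with hfQdef
  have mμ1 : Measurable fun x => ENNReal.ofReal (pμa (k+1) x) :=
    ENNReal.measurable_ofReal.comp (hpμa_smooth (k+1)).continuous.measurable
  have mμ0 : Measurable fun x => ENNReal.ofReal (pμa k x) :=
    ENNReal.measurable_ofReal.comp (hpμa_smooth k).continuous.measurable
  have mν : Measurable fun y => ENNReal.ofReal (pνa k y) :=
    ENNReal.measurable_ofReal.comp (hpνa_smooth k).continuous.measurable
  have mfP : Measurable fP :=
    ((mμ1.comp measurable_fst).mul (mν.comp measurable_snd)).mul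
      (ENNReal.measurable_ofReal.comp he1)
  have mfQ : Measurable fQ :=
    ((mμ0.comp measurable_fst).mul (mν.comp measurable_snd)).mul
      (ENNReal.measurable_ofReal.comp he0)
  have hA1 : Measurable fun p : Euc d × Euc d =>
      ENNReal.ofReal (pμa (k+1) p.1) * ENNReal.ofReal (pνa k p.2) :=
    (mμ1.comp measurable_fst).mul (mν.comp measurable_snd)
  have hA0 : Measurable fun p : Euc d × Euc d =>
      ENNReal.ofReal (pμa k p.1) * ENNReal.ofReal (pνa k p.2) :=
    (mμ0.comp measurable_fst).mul (mν.comp measurable_snd)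
  have hB1 : Measurable fun p : Euc d × Euc d =>
      ENNReal.ofReal (Real.exp (φ (k+1) p.1 + ψ k p.2 - c p)) :=
    ENNReal.measurable_ofReal.comp he1
  have hB0 : Measurable fun p : Euc d × Euc d =>
      ENNReal.ofReal (Real.exp (φ k p.1 + ψ k p.2 - c p)) :=
    ENNReal.measurable_ofReal.comp he0
  have hPrep : ρ (2*k+1) = vol2.withDensity fP := by
    rw [hρ_odd k, hμa (k+1), hνa k,
      prodWithDensityAux _ _ ((hpμa_smooth (k+1)).continuous.measurable.ennreal_ofReal)
        ((hpνa_smooth k).continuous.measurable.ennreal_ofReal),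
      ← withDensity_mul _ hA1 hB1]
    rfl
  have hQrep : ρ (2*k) = vol2.withDensity fQ := by
    rw [hρ_even k, hμa k, hνa k,
      prodWithDensityAux _ _ ((hpμa_smooth k).continuous.measurable.ennreal_ofReal)
        ((hpνa_smooth k).continuous.measurable.ennreal_ofReal),
      ← withDensity_mul _ hA0 hB0]
    rfl
  have hQprob : IsProbabilityMeasure (ρ (2*(k:ℤ))) := by exact_mod_cast hρ_prob (2*k)
  haveI hQprob' : IsProbabilityMeasure (vol2.withDensity fQ) := hQrep ▸ hQprob
  have hPprob : IsProbabilityMeasure (ρ (2*(k:ℤ)+1)) := by exact_mod_cast hρ_prob (2*k+1)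
  haveI hPprob' : IsProbabilityMeasure (vol2.withDensity fP) := hPrep ▸ hPprob
  have hfQ0 : ∀ p, fQ p ≠ 0 := by
    intro p
    simp only [hfQdef, ne_eq, mul_eq_zero, ENNReal.ofReal_eq_zero, not_or, not_le]
    exact ⟨⟨hpμa_pos k p.1, hpνa_pos k p.2⟩, Real.exp_pos _⟩
  have hfQtop : ∀ p, fQ p ≠ ⊤ := fun p =>
    ENNReal.mul_ne_top (ENNReal.mul_ne_top ENNReal.ofReal_ne_top ENNReal.ofReal_ne_top)
      ENNReal.ofReal_ne_top
  have key : (vol2.withDensity fQ).withDensity (fun p => fP p / fQ p) = vol2.withDensity fP :=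
    withDensityDivEq _ mfP mfQ hfQ0 hfQtop
  have hrn : (vol2.withDensity fP).rnDeriv (vol2.withDensity fQ)
      =ᵐ[vol2.withDensity fQ] fun p => fP p / fQ p := by
    conv_lhs => rw [← key]
    exact Measure.rnDeriv_withDensity _ (mfP.div mfQ)
  have hac : vol2.withDensity fP ≪ vol2.withDensity fQ := by
    rw [← key]; exact withDensity_absolutelyContinuous _ _
  have hrnP : (vol2.withDensity fP).rnDeriv (vol2.withDensity fQ)
      =ᵐ[vol2.withDensity fP] fun p => fP p / fQ p := hac.ae_eq hrn
  -- pointwise value of the log-density ratio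
  have hptwise : ∀ p : Euc d × Euc d, Real.log ((fP p / fQ p).toReal)
      = φ (k+1) p.1 + Real.log (pμa (k+1) p.1) - φ k p.1 - Real.log (pμa k p.1) := by
    intro p
    have a1 : (0:ℝ) < pμa (k+1) p.1 := hpμa_pos _ _
    have a0 : (0:ℝ) < pμa k p.1 := hpμa_pos _ _
    have b : (0:ℝ) < pνa k p.2 := hpνa_pos _ _
    have hfPof : fP p = ENNReal.ofReal
        (pμa (k+1) p.1 * pνa k p.2 * Real.exp (φ (k+1) p.1 + ψ k p.2 - c p)) := by
      rw [hfPdef]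
      rw [ENNReal.ofReal_mul (by positivity), ENNReal.ofReal_mul a1.le]
    have hfQof : fQ p = ENNReal.ofReal
        (pμa k p.1 * pνa k p.2 * Real.exp (φ k p.1 + ψ k p.2 - c p)) := by
      rw [hfQdef]
      rw [ENNReal.ofReal_mul (by positivity), ENNReal.ofReal_mul a0.le]
    rw [hfPof, hfQof, ENNReal.toReal_div, ENNReal.toReal_ofReal (by positivity),
      ENNReal.toReal_ofReal (by positivity),
      Real.log_div (by positivity) (by positivity),
      Real.log_mul (by positivity) (Real.exp_ne_zero _),
      Real.log_mul (by positivity) (Real.exp_ne_zero _),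
      Real.log_mul (ne_of_gt a1) (ne_of_gt b),
      Real.log_mul (ne_of_gt a0) (ne_of_gt b),
      Real.log_exp, Real.log_exp]
    ring
  -- the measurable integrand depending only on the first coordinate
  set h : Euc d → ℝ := fun x =>
    φ (k+1) x + Real.log (pμa (k+1) x) - φ k x - Real.log (pμa k x) with hhdef
  have hhm : Measurable h := by
    refine ((hφm1.add ?_).sub hφm0).sub ?_
    · exact Real.measurable_log.comp (hpμa_smooth (k+1)).continuous.measurable
    · exact Real.measurable_log.comp (hpμa_smooth k).continuous.measurable
  -- putting everything together
  have hKLeq : KL (ρ (2*k+1)) (ρ (2*k)) = ∫ p, h p.1 ∂(ρ (2*k+1)) := by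
    simp only [KL]
    rw [hPrep, hQrep]
    refine integral_congr_ae (hrnP.mono fun p hp => ?_)
    dsimp only
    rw [hp]
    exact hptwise p
  rw [hKLeq]
  have hmap := integral_map (μ := ρ (2*k+1)) (φ := Prod.fst) (f := h)
    measurable_fst.aemeasurable hhm.aestronglyMeasurable
  rw [hmapfst] at hmap
  exact hmap.symm
end

section
/- (Lemma, pointwise closeness of log-densities.) Let ρ(x) = e^{−U(x)}/C and ρ̃(x) = e^{−Ũ(x)}/C̃ be probability densities on ℝ^d with normalizing constants C, C̃ > 0, where U and Ũ are differentiable, both satisfy the (m,b)-dissipativity condition, their gradients ∇U and ∇Ũ are L-Lipschitz, and sup_{x ∈ ℝ^d} ‖∇Ũ(x) − ∇U(x)‖ ≤ ε with ε ∈ (0,1]. Then there exists a constant C₀ > 0, depending only on m, b, L, d (but not on ε), such that |log ρ(x) − log ρ̃(x)| ≤ C₀·(ε·‖x‖ + ε) for every x ∈ ℝ^d. -/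
open MeasureTheory Real RealInnerProductSpace

/-!
Write `Ũ = U + D`. Since `‖∇D‖ ≤ ε`, we have `|D x - D 0| ≤ ε‖x‖`, and
`log ρ(x) - log ρ̃(x) = (D x - D 0) + log ∫ e^{-U-(D-D 0)} - log ∫ e^{-U}`.
Both integrals lie between `∫ e^{-U ∓ ε‖y‖}`, which differ by at most `2ε ∫ e^{-U+2‖y‖}`, so the
last difference of logarithms is at most `2ε ∫ e^{-U+2‖y‖} / ∫ e^{-U-‖y‖}`. Dissipativity and the
Lipschitz gradient give `|U - U 0| ≤ 2L + b` on the unit ball and, integrating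
`⟪y, ∇U y⟫ ≥ m‖y‖² - b` along rays, `U - U 0 ≥ m/2 ‖y‖² - b‖y‖ - c(m,b,L)` everywhere; together
these bound the ratio uniformly in `U` and `ε`.
-/

open scoped NNReal

section Potential

variable {E : Type*} [NormedAddCommGroup E] [InnerProductSpace ℝ E] [CompleteSpace E]
  {U V W : E → ℝ} {m b : ℝ} {K : ℝ≥0}

def IsDissipative (m b : ℝ) (U : E → ℝ) : Prop :=
  ∀ x, ⟪x, gradient U x⟫ ≥ m * ‖x‖ ^ 2 - b

lemma IsDissipative.nonneg (hdis : IsDissipative m b U) : 0 ≤ b := by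
  simpa using hdis 0

lemma norm_fderiv_sub_fderiv (f g : E → ℝ) (x y : E) :
    ‖fderiv ℝ f x - fderiv ℝ g y‖ = ‖gradient f x - gradient g y‖ := by
  simp only [gradient, ← map_sub, LinearIsometryEquiv.norm_map]

lemma abs_sub_sub_inner_gradient_le (hU : Differentiable ℝ U)
    (hLip : LipschitzWith K (gradient U)) (x y : E) :
    |U y - U x - ⟪gradient U x, y - x⟫| ≤ K * ‖y - x‖ ^ 2 := by
  have hfderiv : ∀ z ∈ Metric.closedBall x ‖y - x‖,
      ‖fderiv ℝ U z - fderiv ℝ U x‖ ≤ K * ‖y - x‖ := by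
    intro z hz
    rw [norm_fderiv_sub_fderiv]
    refine (hLip.norm_sub_le z x).trans (mul_le_mul_of_nonneg_left ?_ K.coe_nonneg)
    rwa [← dist_eq_norm]
  have hy : y ∈ Metric.closedBall x ‖y - x‖ := by simp [dist_eq_norm]
  have h := (convex_closedBall x ‖y - x‖).norm_image_sub_le_of_norm_fderiv_le' (fun z _ => hU z)
    hfderiv (Metric.mem_closedBall_self (norm_nonneg _)) hy
  rw [← InnerProductSpace.toDual_symm_apply] at h
  rw [sq, ← mul_assoc]
  exact h

lemma IsDissipative.norm_gradient_zero_le (hdis : IsDissipative m b U) (hm : 0 ≤ m)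
    (hLip : LipschitzWith K (gradient U)) : ‖gradient U 0‖ ≤ K + b := by
  set g := gradient U 0
  rcases eq_or_ne g 0 with hg | hg
  · rw [hg, norm_zero]
    exact add_nonneg K.coe_nonneg hdis.nonneg
  -- test the dissipativity at the unit vector pointing against `∇U 0`
  set u : E := -‖g‖⁻¹ • g
  have hu : ‖u‖ = 1 := by simp [u, norm_smul, hg]
  have hug : ⟪u, g⟫ = -‖g‖ := by
    simp only [u, real_inner_smul_left, real_inner_self_eq_norm_sq]
    field_simp
  have hLipu : ⟪u, gradient U u - g⟫ ≤ K :=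
    (real_inner_le_norm _ _).trans (by simpa [hu] using hLip.norm_sub_le u 0)
  have hdisu : m - b ≤ ⟪u, gradient U u⟫ := by simpa [hu] using hdis u
  have hsplit : ⟪u, gradient U u⟫ = ⟪u, g⟫ + ⟪u, gradient U u - g⟫ := by
    rw [← inner_add_right, add_sub_cancel]
  linarith

lemma IsDissipative.abs_sub_apply_zero_le (hdis : IsDissipative m b U) (hU : Differentiable ℝ U)
    (hm : 0 ≤ m) (hLip : LipschitzWith K (gradient U)) (x : E) :
    |U x - U 0| ≤ (K + b) * ‖x‖ + K * ‖x‖ ^ 2 := by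
  have htaylor := abs_sub_sub_inner_gradient_le hU hLip 0 x
  rw [sub_zero] at htaylor
  have hlin : |⟪gradient U 0, x⟫| ≤ (K + b) * ‖x‖ := (abs_real_inner_le_norm _ _).trans
    (mul_le_mul_of_nonneg_right (hdis.norm_gradient_zero_le hm hLip) (norm_nonneg _))
  rw [abs_le] at htaylor hlin ⊢
  constructor <;> linarith

lemma IsDissipative.sub_le_sub_smul_of_norm_eq_one (hdis : IsDissipative m b U)
    (hU : Differentiable ℝ U) {u : E} (hu : ‖u‖ = 1) {r : ℝ} (hr : 1 ≤ r) :
    m * (r ^ 2 - 1) / 2 - b * (r - 1) ≤ U (r • u) - U u := by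
  let f : ℝ → ℝ := fun s => U (s • u) - (m * s ^ 2 / 2 - b * s)
  have hderiv : ∀ s, HasDerivAt f (⟪gradient U (s • u), u⟫ - (m * s - b)) s := by
    intro s
    have hray : HasDerivAt (fun s : ℝ => U (s • u)) ⟪gradient U (s • u), u⟫ s := by
      have h := (hU (s • u)).hasFDerivAt.comp_hasDerivAt s ((hasDerivAt_id s).smul_const u)
      rw [one_smul, ← InnerProductSpace.toDual_symm_apply] at h
      exact h
    have hpoly : HasDerivAt (fun s : ℝ => m * s ^ 2 / 2 - b * s) (m * s - b) s := by
      refine ((((hasDerivAt_pow 2 s).const_mul m).div_const 2).fun_sub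
        ((hasDerivAt_id' s).const_mul b)).congr_deriv ?_
      push_cast
      ring
    exact hray.fun_sub hpoly
  have hderiv_nonneg : ∀ s ∈ interior (Set.Ici (1 : ℝ)),
      0 ≤ ⟪gradient U (s • u), u⟫ - (m * s - b) := by
    intro s hs
    rw [interior_Ici, Set.mem_Ioi] at hs
    have h := hdis (s • u)
    rw [real_inner_smul_left, norm_smul, hu, Real.norm_of_nonneg (by linarith), real_inner_comm]
      at h
    have hb := hdis.nonneg
    refine nonneg_of_mul_nonneg_right ?_ (by linarith : (0 : ℝ) < s)
    nlinarith
  have hmono := monotoneOn_of_hasDerivWithinAt_nonneg (convex_Ici 1)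
    (fun s _ => (hderiv s).continuousAt.continuousWithinAt)
    (fun s _ => (hderiv s).hasDerivWithinAt) hderiv_nonneg
    Set.self_mem_Ici hr hr
  simp only [f, one_smul] at hmono
  linarith

lemma IsDissipative.add_quadratic_le (hdis : IsDissipative m b U) (hU : Differentiable ℝ U)
    (hm : 0 ≤ m) (hLip : LipschitzWith K (gradient U)) (x : E) :
    U 0 + m / 2 * ‖x‖ ^ 2 - b * ‖x‖ - (2 * K + b + m / 2) ≤ U x := by
  have hb := hdis.nonneg
  have hball : ∀ y : E, ‖y‖ ≤ 1 → U 0 - (2 * K + b) ≤ U y := by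
    intro y hy
    have := (abs_le.mp (hdis.abs_sub_apply_zero_le hU hm hLip y)).1
    have hy2 : ‖y‖ ^ 2 ≤ 1 := pow_le_one₀ (norm_nonneg y) hy
    have hlin : (K + b) * ‖y‖ ≤ K + b :=
      mul_le_of_le_one_right (add_nonneg K.coe_nonneg hb) hy
    nlinarith [K.coe_nonneg]
  rcases le_or_gt ‖x‖ 1 with hx | hx
  · have hx2 : ‖x‖ ^ 2 ≤ 1 := pow_le_one₀ (norm_nonneg x) hx
    nlinarith [hball x hx, norm_nonneg x]
  · set u := ‖x‖⁻¹ • x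
    have hu : ‖u‖ = 1 := by simp [u, norm_smul, (by linarith : ‖x‖ ≠ 0)]
    have hray := hdis.sub_le_sub_smul_of_norm_eq_one hU hu hx.le
    rw [smul_inv_smul₀ (by linarith : ‖x‖ ≠ 0)] at hray
    nlinarith [hball u hu.le]

lemma IsDissipative.exp_neg_add_two_norm_le (hdis : IsDissipative m b U)
    (hU : Differentiable ℝ U) (hm : 0 ≤ m) (hLip : LipschitzWith K (gradient U)) (y : E) :
    exp (-U y + 2 * ‖y‖) ≤
      exp (-U 0) * (exp (2 * K + b + m / 2) * exp (-(m / 2) * ‖y‖ ^ 2 + (b + 2) * ‖y‖)) := by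
  rw [← exp_add, ← exp_add]
  exact exp_le_exp.mpr (by linarith [hdis.add_quadratic_le hU hm hLip y])

lemma abs_sub_sub_sub_le_of_norm_gradient_sub_le (hV : Differentiable ℝ V)
    (hW : Differentiable ℝ W) {ε : ℝ} (hε : ∀ z, ‖gradient W z - gradient V z‖ ≤ ε) (x y : E) :
    |(W y - V y) - (W x - V x)| ≤ ε * ‖y - x‖ := by
  have hfderiv : ∀ z ∈ Set.univ, ‖fderiv ℝ (fun w => W w - V w) z‖ ≤ ε := by
    intro z _
    rw [fderiv_fun_sub (hW z) (hV z), norm_fderiv_sub_fderiv]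
    exact hε z
  simpa using convex_univ.norm_image_sub_le_of_norm_fderiv_le (fun z _ => (hW z).sub (hV z))
    hfderiv (Set.mem_univ x) (Set.mem_univ y)

end Potential

section LogIntegral

variable {α : Type*} [MeasurableSpace α] {μ : Measure α} {V w φ : α → ℝ} {ε : ℝ}

lemma abs_log_sub_log_le_of_mem_Icc {l u a c : ℝ} (hl : 0 < l) (ha : a ∈ Set.Icc l u)
    (hc : c ∈ Set.Icc l u) : |log a - log c| ≤ (u - l) / l := by
  have hgap : log u - log l ≤ (u - l) / l := by
    rw [← log_div (by linarith [ha.1, ha.2]) hl.ne']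
    exact (log_le_sub_one_of_pos (div_pos (by linarith [ha.1, ha.2]) hl)).trans_eq
      (by field_simp)
  have hmono : ∀ t ∈ Set.Icc l u, log l ≤ log t ∧ log t ≤ log u := fun t ht =>
    ⟨log_le_log hl ht.1, log_le_log (hl.trans_le ht.1) ht.2⟩
  obtain ⟨ha₁, ha₂⟩ := hmono a ha
  obtain ⟨hc₁, hc₂⟩ := hmono c hc
  rw [abs_le]
  constructor <;> linarith

lemma exp_mul_sub_exp_neg_mul_le (hε₀ : 0 ≤ ε) (hε₁ : ε ≤ 1) {t : ℝ} (ht : 0 ≤ t) :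
    exp (ε * t) - exp (-(ε * t)) ≤ 2 * ε * exp (2 * t) := by
  set s := ε * t
  have hs : 0 ≤ s := mul_nonneg hε₀ ht
  have hst : s ≤ t := mul_le_of_le_one_left ht hε₁
  -- `e^s - e^{-s} = e^{-s} (e^{2s} - 1) ≤ 2 s e^s`, then `s = ε t ≤ ε e^t` and `e^s ≤ e^t`
  have hsinh : exp s - exp (-s) ≤ 2 * s * exp s := by
    have h := add_one_le_exp (-(2 * s))
    have hprod : exp (-s) * exp (2 * s) = exp s := by rw [← exp_add]; ring_nf
    have hinv : exp (2 * s) * exp (-(2 * s)) = 1 := by rw [← exp_add]; simp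
    nlinarith [exp_pos s, exp_pos (-s), exp_pos (2 * s)]
  calc exp s - exp (-s) ≤ 2 * s * exp s := hsinh
    _ ≤ 2 * (ε * exp t) * exp t := by
        gcongr
        · exact mul_le_mul_of_nonneg_left ((add_one_le_exp t).trans' (by linarith)) hε₀
    _ = 2 * ε * exp (2 * t) := by rw [two_mul t, exp_add]; ring

lemma abs_log_integral_exp_sub_le (hV : Measurable V) (hw : Measurable w) (hφ : Measurable φ)
    (hw₀ : ∀ y, 0 ≤ w y) (hε₀ : 0 ≤ ε) (hε₁ : ε ≤ 1) (hφw : ∀ y, |φ y| ≤ ε * w y)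
    (hint : Integrable (fun y => exp (-V y + 2 * w y)) μ)
    (hpos : 0 < ∫ y, exp (-V y - w y) ∂μ) :
    |log (∫ y, exp (-V y - φ y) ∂μ) - log (∫ y, exp (-V y) ∂μ)| ≤
      2 * ε * (∫ y, exp (-V y + 2 * w y) ∂μ) / ∫ y, exp (-V y - w y) ∂μ := by
  have hdom : ∀ f : α → ℝ, Measurable f → (∀ y, f y ≤ -V y + 2 * w y) →
      Integrable (fun y => exp (f y)) μ := fun f hf hle =>
    hint.mono' hf.exp.aestronglyMeasurable (Filter.Eventually.of_forall fun y => by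
      rw [norm_of_nonneg (exp_pos _).le]; exact exp_le_exp.mpr (hle y))
  have hwε : ∀ y, ε * w y ≤ w y := fun y => mul_le_of_le_one_left (hw₀ y) hε₁
  have hεw : ∀ y, 0 ≤ ε * w y := fun y => mul_nonneg hε₀ (hw₀ y)
  have intJ := hdom (fun y => -V y - ε * w y) (by fun_prop)
    (fun y => by linarith [hεw y, hw₀ y])
  have intP := hdom (fun y => -V y + ε * w y) (by fun_prop)
    (fun y => by linarith [hwε y, hw₀ y])
  set J := ∫ y, exp (-V y - ε * w y) ∂μ
  set P := ∫ y, exp (-V y + ε * w y) ∂μ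
  have hJ : ∫ y, exp (-V y - w y) ∂μ ≤ J :=
    integral_mono (hdom _ (by fun_prop) fun y => by linarith [hw₀ y]) intJ
      fun y => exp_le_exp.mpr (by linarith [hwε y])
  have hmem : ∀ f : α → ℝ, Measurable f → (∀ y, |f y| ≤ ε * w y) →
      ∫ y, exp (-V y - f y) ∂μ ∈ Set.Icc J P := by
    intro f hf hfw
    have hint_f := hdom (fun y => -V y - f y) (by fun_prop)
      fun y => by linarith [(abs_le.mp (hfw y)).1, hwε y, hw₀ y]
    exact ⟨integral_mono intJ hint_f fun y => exp_le_exp.mpr (by linarith [(abs_le.mp (hfw y)).2]),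
      integral_mono hint_f intP fun y => exp_le_exp.mpr (by linarith [(abs_le.mp (hfw y)).1])⟩
  have hgap : P - J ≤ 2 * ε * ∫ y, exp (-V y + 2 * w y) ∂μ := by
    rw [← integral_sub intP intJ, ← integral_const_mul]
    refine integral_mono (intP.sub intJ) (hint.const_mul _) fun y => ?_
    have h := mul_le_mul_of_nonneg_left (exp_mul_sub_exp_neg_mul_le hε₀ hε₁ (hw₀ y))
      (exp_pos (-V y)).le
    simp only [sub_eq_add_neg, exp_add] at h ⊢
    linarith
  calc |log (∫ y, exp (-V y - φ y) ∂μ) - log (∫ y, exp (-V y) ∂μ)|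
      ≤ (P - J) / J := abs_log_sub_log_le_of_mem_Icc (hpos.trans_le hJ) (hmem φ hφ hφw)
        (by simpa using hmem 0 measurable_const (fun y => by simpa using hεw y))
    _ ≤ 2 * ε * (∫ y, exp (-V y + 2 * w y) ∂μ) / ∫ y, exp (-V y - w y) ∂μ :=
        div_le_div₀ (by positivity) hgap hpos hJ

lemma log_exp_div_integral_sub_log_exp_div_integral (U W : α → ℝ) (z x : α)
    (hU : ∫ y, exp (-U y) ∂μ ≠ 0) (hW : ∫ y, exp (-W y) ∂μ ≠ 0) :
    log (exp (-U x) / ∫ y, exp (-U y) ∂μ) - log (exp (-W x) / ∫ y, exp (-W y) ∂μ) =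
      (W x - U x - (W z - U z)) +
        (log (∫ y, exp (-U y - (W y - U y - (W z - U z))) ∂μ) - log (∫ y, exp (-U y) ∂μ)) := by
  have hshift : ∫ y, exp (-W y) ∂μ =
      exp (-(W z - U z)) * ∫ y, exp (-U y - (W y - U y - (W z - U z))) ∂μ := by
    rw [← integral_const_mul]
    congr 1 with y
    rw [← exp_add]
    ring_nf
  have hΦ := right_ne_zero_of_mul (hshift ▸ hW)
  rw [log_div (exp_ne_zero _) hU, log_div (exp_ne_zero _) hW, hshift,
    log_mul (exp_ne_zero _) hΦ, log_exp, log_exp, log_exp]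
  ring

end LogIntegral

section Integrals

variable {E : Type*} [NormedAddCommGroup E] [InnerProductSpace ℝ E] [FiniteDimensional ℝ E]
  [MeasurableSpace E] [BorelSpace E] {U : E → ℝ} {m b : ℝ} {K : ℝ≥0}

lemma integrable_exp_neg_mul_sq_norm_add_mul_norm {a : ℝ} (ha : 0 < a) (c : ℝ) :
    Integrable (fun x : E => exp (-a * ‖x‖ ^ 2 + c * ‖x‖)) := by
  have hgauss : Integrable (fun x : E => exp (-(a / 2) * ‖x‖ ^ 2)) := by
    have h := (GaussianFourier.integrable_cexp_neg_mul_sq_norm_add (b := ((a / 2 : ℝ) : ℂ))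
      (by simpa using ha) 0 (0 : E)).norm
    refine h.congr (Filter.Eventually.of_forall fun x => ?_)
    simp [Complex.norm_exp, ← Complex.ofReal_pow]
  refine (hgauss.const_mul (exp (c ^ 2 / (2 * a)))).mono'
    (by fun_prop) (Filter.Eventually.of_forall fun x => ?_)
  rw [norm_of_nonneg (exp_pos _).le, ← exp_add]
  -- complete the square: `a/2 ‖x‖² - c ‖x‖ + c²/(2a) = a/2 (‖x‖ - c/a)² ≥ 0`
  refine exp_le_exp.mpr ?_
  have hsq : 0 ≤ a / 2 * (‖x‖ - c / a) ^ 2 := by positivity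
  have hexp : a / 2 * (‖x‖ - c / a) ^ 2 = a / 2 * ‖x‖ ^ 2 - c * ‖x‖ + c ^ 2 / (2 * a) := by
    field_simp
    ring
  linarith

lemma IsDissipative.integrable_exp_neg_add_two_norm (hdis : IsDissipative m b U)
    (hU : Differentiable ℝ U) (hm : 0 < m) (hLip : LipschitzWith K (gradient U)) :
    Integrable (fun y : E => exp (-U y + 2 * ‖y‖)) := by
  have hUc := hU.continuous
  have hgauss := integrable_exp_neg_mul_sq_norm_add_mul_norm (E := E) (a := m / 2) (by positivity)
    (b + 2)
  exact ((hgauss.const_mul _).const_mul _).mono' (by fun_prop)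
    (Filter.Eventually.of_forall fun y => by
      rw [norm_of_nonneg (exp_pos _).le]; exact hdis.exp_neg_add_two_norm_le hU hm.le hLip y)

lemma IsDissipative.integral_exp_neg_add_two_norm_le (hdis : IsDissipative m b U)
    (hU : Differentiable ℝ U) (hm : 0 < m) (hLip : LipschitzWith K (gradient U)) :
    ∫ y, exp (-U y + 2 * ‖y‖) ≤
      exp (-U 0) *
        (exp (2 * K + b + m / 2) * ∫ y : E, exp (-(m / 2) * ‖y‖ ^ 2 + (b + 2) * ‖y‖)) := by
  have hgauss := integrable_exp_neg_mul_sq_norm_add_mul_norm (E := E) (a := m / 2) (by positivity)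
    (b + 2)
  rw [← integral_const_mul, ← integral_const_mul]
  exact integral_mono (hdis.integrable_exp_neg_add_two_norm hU hm hLip)
    ((hgauss.const_mul _).const_mul _) (hdis.exp_neg_add_two_norm_le hU hm.le hLip)

lemma IsDissipative.le_integral_exp_neg_sub_norm (hdis : IsDissipative m b U)
    (hU : Differentiable ℝ U) (hm : 0 < m) (hLip : LipschitzWith K (gradient U)) :
    exp (-U 0) * (exp (-(2 * K + b + 1)) * volume.real (Metric.ball (0 : E) 1)) ≤
      ∫ y, exp (-U y - ‖y‖) := by
  have hUc := hU.continuous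
  have hint : Integrable (fun y : E => exp (-U y - ‖y‖)) :=
    (hdis.integrable_exp_neg_add_two_norm hU hm hLip).mono' (by fun_prop)
      (Filter.Eventually.of_forall fun y => by
        rw [norm_of_nonneg (exp_pos _).le]; exact exp_le_exp.mpr (by linarith [norm_nonneg y]))
  have hball : ∀ y ∈ Metric.ball (0 : E) 1, exp (-U 0 + -(2 * K + b + 1)) ≤ exp (-U y - ‖y‖) := by
    intro y hy
    have hy : ‖y‖ ≤ 1 := (mem_ball_zero_iff.mp hy).le
    have hclose := (abs_le.mp (hdis.abs_sub_apply_zero_le hU hm.le hLip y)).2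
    have hb := hdis.nonneg
    have hy2 : ‖y‖ ^ 2 ≤ 1 := pow_le_one₀ (norm_nonneg y) hy
    have hlin : (K + b) * ‖y‖ ≤ K + b := mul_le_of_le_one_right (add_nonneg K.coe_nonneg hb) hy
    exact exp_le_exp.mpr (by nlinarith [K.coe_nonneg])
  calc exp (-U 0) * (exp (-(2 * K + b + 1)) * volume.real (Metric.ball (0 : E) 1))
      = exp (-U 0 + -(2 * K + b + 1)) * volume.real (Metric.ball (0 : E) 1) := by
        rw [exp_add]; ring
    _ ≤ ∫ y in Metric.ball (0 : E) 1, exp (-U y - ‖y‖) :=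
        setIntegral_ge_of_const_le_real measurableSet_ball measure_ball_lt_top.ne hball
          hint.integrableOn
    _ ≤ ∫ y, exp (-U y - ‖y‖) :=
        setIntegral_le_integral hint (Filter.Eventually.of_forall fun y => (exp_pos _).le)

lemma exists_integral_exp_neg_add_two_norm_div_le (hm : 0 < m) :
    ∃ C, 0 ≤ C ∧ ∀ U : E → ℝ, Differentiable ℝ U → IsDissipative m b U →
      LipschitzWith K (gradient U) → 0 < ∫ y, exp (-U y - ‖y‖) ∧
        (∫ y, exp (-U y + 2 * ‖y‖)) / ∫ y, exp (-U y - ‖y‖) ≤ C := by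
  set M := exp (2 * K + b + m / 2) * ∫ y : E, exp (-(m / 2) * ‖y‖ ^ 2 + (b + 2) * ‖y‖)
  set γ := exp (-(2 * K + b + 1)) * volume.real (Metric.ball (0 : E) 1)
  have hM : 0 ≤ M := mul_nonneg (exp_pos _).le (integral_nonneg fun y => (exp_pos _).le)
  have hγ : 0 < γ := mul_pos (exp_pos _)
    (ENNReal.toReal_pos (Metric.measure_ball_pos volume _ one_pos).ne' measure_ball_lt_top.ne)
  refine ⟨M / γ, by positivity, fun U hU hdis hLip => ?_⟩
  have hlower := hdis.le_integral_exp_neg_sub_norm hU hm hLip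
  refine ⟨(by positivity : 0 < exp (-U 0) * γ).trans_le hlower, ?_⟩
  calc _ ≤ exp (-U 0) * M / (exp (-U 0) * γ) :=
        div_le_div₀ (by positivity) (hdis.integral_exp_neg_add_two_norm_le hU hm hLip)
          (by positivity) hlower
    _ = M / γ := mul_div_mul_left _ _ (exp_pos _).ne'

end Integrals

theorem log_density_pointwise_closeness_general
    (d : ℕ) (m b L : ℝ) (hm : 0 < m) :
    ∃ C₀ : ℝ, 0 < C₀ ∧
      ∀ (ε : ℝ), 0 < ε → ε ≤ 1 →
      ∀ (U Ut : Euc d → ℝ) (Cn Ctn : ℝ), 0 < Cn → 0 < Ctn →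
      Differentiable ℝ U → Differentiable ℝ Ut →
      -- `ρ = e^{-U}/C` and `ρ̃ = e^{-Ũ}/C̃` are probability densities
      ((∫ x, Real.exp (-(U x)) / Cn) = 1) →
      ((∫ x, Real.exp (-(Ut x)) / Ctn) = 1) →
      -- `(m,b)`-dissipativity of `U` and `Ũ`
      (∀ x, ⟪x, gradient U x⟫ ≥ m * ‖x‖ ^ 2 - b) →
      (∀ x, ⟪x, gradient Ut x⟫ ≥ m * ‖x‖ ^ 2 - b) →
      -- `L`-Lipschitz gradients
      LipschitzWith (Real.toNNReal L) (fun x => gradient U x) →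
      LipschitzWith (Real.toNNReal L) (fun x => gradient Ut x) →
      -- `ε`-closeness of the gradients
      (∀ x, ‖gradient Ut x - gradient U x‖ ≤ ε) →
      ∀ x, |Real.log (Real.exp (-(U x)) / Cn) - Real.log (Real.exp (-(Ut x)) / Ctn)| ≤
        C₀ * (ε * ‖x‖ + ε) := by
  obtain ⟨C, hC, hC_bound⟩ :=
    exists_integral_exp_neg_add_two_norm_div_le (E := Euc d) (b := b) (K := L.toNNReal) hm
  refine ⟨1 + 2 * C, by positivity, ?_⟩
  intro ε hε hε₁ U Ut Cn Ctn hCn hCtn hU hUt hIU hIUt hdis _ hLip _ hgrad x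
  rw [integral_div, div_eq_one_iff_eq hCn.ne'] at hIU
  rw [integral_div, div_eq_one_iff_eq hCtn.ne'] at hIUt
  subst hIU hIUt
  obtain ⟨hpos, hratio⟩ := hC_bound U hU hdis hLip
  have hD : ∀ y, |Ut y - U y - (Ut 0 - U 0)| ≤ ε * ‖y‖ := fun y => by
    simpa using abs_sub_sub_sub_le_of_norm_gradient_sub_le hU hUt hgrad 0 y
  have hlog := abs_log_integral_exp_sub_le (μ := volume) hU.continuous.measurable
    continuous_norm.measurable ((hUt.continuous.sub hU.continuous).sub continuous_const).measurable
    norm_nonneg hε.le hε₁ hD (IsDissipative.integrable_exp_neg_add_two_norm hdis hU hm hLip) hpos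
  rw [log_exp_div_integral_sub_log_exp_div_integral U Ut 0 x hCn.ne' hCtn.ne']
  calc _ ≤ ε * ‖x‖ + 2 * ε * C := (abs_add_le _ _).trans (add_le_add (hD x)
        (hlog.trans (by rw [mul_div_assoc]; gcongr)))
    _ ≤ (1 + 2 * C) * (ε * ‖x‖ + ε) := by
        nlinarith [mul_nonneg hC (mul_nonneg hε.le (norm_nonneg x)), norm_nonneg x]

/-- Lemma: pointwise closeness of log-densities. The constant `C₀` depends only on
`m, b, L, d`, not on `ε`. -/
theorem log_density_pointwise_closeness
    (d : ℕ) (hd : 1 ≤ d) (m b L : ℝ) (hm : 0 < m) (hb : 0 ≤ b) (hL : 0 ≤ L) :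
    ∃ C₀ : ℝ, 0 < C₀ ∧
      ∀ (ε : ℝ), 0 < ε → ε ≤ 1 →
      ∀ (U Ut : Euc d → ℝ) (Cn Ctn : ℝ), 0 < Cn → 0 < Ctn →
      Differentiable ℝ U → Differentiable ℝ Ut →
      -- `ρ = e^{-U}/C` and `ρ̃ = e^{-Ũ}/C̃` are probability densities
      ((∫ x, Real.exp (-(U x)) / Cn) = 1) →
      ((∫ x, Real.exp (-(Ut x)) / Ctn) = 1) →
      -- `(m,b)`-dissipativity of `U` and `Ũ`
      (∀ x, ⟪x, gradient U x⟫ ≥ m * ‖x‖ ^ 2 - b) →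
      (∀ x, ⟪x, gradient Ut x⟫ ≥ m * ‖x‖ ^ 2 - b) →
      -- `L`-Lipschitz gradients
      LipschitzWith (Real.toNNReal L) (fun x => gradient U x) →
      LipschitzWith (Real.toNNReal L) (fun x => gradient Ut x) →
      -- `ε`-closeness of the gradients
      (∀ x, ‖gradient Ut x - gradient U x‖ ≤ ε) →
      ∀ x, |Real.log (Real.exp (-(U x)) / Cn) - Real.log (Real.exp (-(Ut x)) / Ctn)| ≤
        C₀ * (ε * ‖x‖ + ε) :=
  log_density_pointwise_closeness_general d m b L hm
end

section
/- (Lemma, finite sequence bound.) Let ε > 0, C ≥ 0 and N ∈ ℕ, and let (x_i)_{0 ≤ i ≤ N} be a finite sequence of nonnegative real numbers such that Σ_{i=0}^{N} x_i ≤ C and x_{i+1} ≤ x_i + ε for all 0 ≤ i ≤ N−1. Then for every 0 ≤ i ≤ N: x_i ≤ C/(i+1) + √(2Cε) + ε. -/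
/-!
Comparing `x i` with the `k + 1` preceding terms, each of which is at least `x i` minus a multiple
of `ε`, gives `x i ≤ C / (k + 1) + ε k / 2` for every `k ≤ i`. Taking `k = min i ⌊√(2Cε) / ε⌋`
balances the two terms, each then being at most `√(2Cε) / 2`.
-/

open Finset

section StepBounded

variable {ε : ℝ} {N : ℕ} {x : ℕ → ℝ}

theorem mul_le_sum_range_add_of_step_le (hstep : ∀ i, i + 1 ≤ N → x (i + 1) ≤ x i + ε)
    (a : ℕ) : ∀ k, a + k ≤ N →
      ((k : ℝ) + 1) * x (a + k) ≤ ∑ j ∈ range (k + 1), x (a + j) + ε * k * (k + 1) / 2 := by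
  intro k
  induction k with
  | zero => simp
  | succ k ih =>
    intro hk
    have hprev := ih (by omega)
    have hlast : ((k : ℝ) + 1) * x (a + (k + 1)) ≤ ((k : ℝ) + 1) * (x (a + k) + ε) :=
      mul_le_mul_of_nonneg_left (hstep (a + k) (by omega)) (by positivity)
    rw [sum_range_succ]
    push_cast
    linarith

theorem sum_range_add_le_sum_range (hnn : ∀ i, i ≤ N → 0 ≤ x i) {a k : ℕ} (h : a + k ≤ N) :
    ∑ j ∈ range (k + 1), x (a + j) ≤ ∑ j ∈ range (N + 1), x j := by
  have hIco : Ico a (a + (k + 1)) ⊆ range (N + 1) := by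
    intro j hj
    simp only [mem_Ico, mem_range] at hj ⊢
    omega
  calc ∑ j ∈ range (k + 1), x (a + j) = ∑ j ∈ Ico a (a + (k + 1)), x j := by
        rw [sum_Ico_eq_sum_range, Nat.add_sub_cancel_left]
    _ ≤ ∑ j ∈ range (N + 1), x j :=
        sum_le_sum_of_subset_of_nonneg hIco fun j hj _ => hnn j (by simpa [Nat.lt_succ_iff] using hj)

theorem le_div_add_of_step_le {C : ℝ} (hnn : ∀ i, i ≤ N → 0 ≤ x i)
    (hsum : ∑ i ∈ range (N + 1), x i ≤ C) (hstep : ∀ i, i + 1 ≤ N → x (i + 1) ≤ x i + ε)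
    {i k : ℕ} (hi : i ≤ N) (hk : k ≤ i) : x i ≤ C / ((k : ℝ) + 1) + ε * k / 2 := by
  have hwindow := mul_le_sum_range_add_of_step_le hstep (i - k) k (by omega)
  have htotal := sum_range_add_le_sum_range hnn (a := i - k) (k := k) (by omega)
  rw [Nat.sub_add_cancel hk] at hwindow
  rw [div_add' _ _ _ (by positivity), le_div_iff₀ (by positivity)]
  linarith

end StepBounded

theorem exists_le_div_add_mul_le {ε C : ℝ} (hε : 0 < ε) (hC : 0 ≤ C) (i : ℕ) :
    ∃ k ≤ i, C / ((k : ℝ) + 1) + ε * k / 2 ≤ C / ((i : ℝ) + 1) + √(2 * C * ε) := by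
  set s := √(2 * C * ε)
  have hs : 0 ≤ s := Real.sqrt_nonneg _
  have hs2 : s ^ 2 = 2 * C * ε := Real.sq_sqrt (by positivity)
  set m := ⌊s / ε⌋₊
  have hm_le : ε * m ≤ s := by
    have := Nat.floor_le (div_nonneg hs hε.le)
    rwa [le_div_iff₀ hε, mul_comm] at this
  rcases le_or_gt m i with hmi | him
  · refine ⟨m, hmi, ?_⟩
    have hC_le : C / ((m : ℝ) + 1) ≤ s / 2 := by
      have := Nat.lt_floor_add_one (s / ε)
      rw [div_lt_iff₀ hε] at this
      rw [div_le_iff₀ (by positivity)]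
      nlinarith
    have : 0 ≤ C / ((i : ℝ) + 1) := by positivity
    linarith
  · refine ⟨i, le_rfl, ?_⟩
    have : ε * i ≤ ε * m := mul_le_mul_of_nonneg_left (by exact_mod_cast him.le) hε.le
    linarith

/-- Lemma: finite sequence bound. -/
theorem finite_sequence_bound (ε C : ℝ) (hε : 0 < ε) (hC : 0 ≤ C) (N : ℕ) (x : ℕ → ℝ)
    (hnn : ∀ i, i ≤ N → 0 ≤ x i)
    (hsum : (∑ i ∈ Finset.range (N + 1), x i) ≤ C)
    (hstep : ∀ i, i + 1 ≤ N → x (i + 1) ≤ x i + ε) :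
    ∀ i, i ≤ N → x i ≤ C / ((i : ℝ) + 1) + Real.sqrt (2 * C * ε) + ε := by
  intro i hi
  obtain ⟨k, hk, hbound⟩ := exists_le_div_add_mul_le hε hC i
  have := le_div_add_of_step_le hnn hsum hstep hi hk
  linarith
end

section
/- (Lemma, infinite sequence bound.) Let ε > 0 and let (x_i)_{i ≥ 0} be a sequence of nonnegative real numbers such that the series Σ_{i=0}^{∞} x_i converges with sum C < ∞ and x_{i+1} ≤ x_i + ε for all i ≥ 0. Then for every i ≥ 0: x_i ≤ C/(i+1) + √(2Cε) + ε. -/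
/-!
Since the sequence can grow by at most `ε` per step, the `k` terms `x (i - k + 1), …, x i` are at
least `x i - t ε` for `t < k`, so `k x_i - ε k (k - 1) / 2 ≤ C`, i.e.
`x_i ≤ C / k + ε (k - 1) / 2` for every `1 ≤ k ≤ i + 1`. With `Q = √(2 C ε)`, take `k = i + 1`
when `ε i ≤ Q`, which gives `x_i ≤ C / (i + 1) + Q / 2`; otherwise take `k = ⌊Q / ε⌋ + 1`, the
integer balancing the two terms, which gives `x_i ≤ Q`.
-/

open Finset

theorem le_add_nsmul_of_forall_le_add {α : Type*} [AddCommMonoid α] [Preorder α]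
    [IsOrderedAddMonoid α] {x : ℕ → α} {ε : α} (hstep : ∀ i, x (i + 1) ≤ x i + ε) (j m : ℕ) :
    x (j + m) ≤ x j + m • ε := by
  induction m with
  | zero => simp
  | succ m ih =>
    calc x (j + (m + 1)) ≤ x (j + m) + ε := hstep (j + m)
      _ ≤ x j + m • ε + ε := by gcongr
      _ = x j + (m + 1) • ε := by rw [succ_nsmul, add_assoc]

theorem sum_range_natCast_id {K : Type*} [Field K] [CharZero K] (k : ℕ) :
    ∑ t ∈ range k, (t : K) = k * (k - 1) / 2 := by
  rcases Nat.eq_zero_or_pos k with rfl | hk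
  · simp
  have h := congrArg (Nat.cast (R := K)) (sum_range_id_mul_two k)
  push_cast [Nat.cast_sub hk] at h
  rw [eq_div_iff two_ne_zero, h]

theorem le_div_add_of_hasSum {x : ℕ → ℝ} {C ε : ℝ} (hnn : ∀ i, 0 ≤ x i) (hsum : HasSum x C)
    (hstep : ∀ i, x (i + 1) ≤ x i + ε) {i k : ℕ} (hk₀ : 0 < k) (hk : k ≤ i + 1) :
    x i ≤ C / k + ε * (k - 1) / 2 := by
  have hdrift : ∀ t ∈ range k, x i - t * ε ≤ x (i - t) := fun t ht => by
    have h := le_add_nsmul_of_forall_le_add hstep (i - t) t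
    rw [Nat.sub_add_cancel (by rw [mem_range] at ht; omega), nsmul_eq_mul] at h
    linarith
  have hinj : Set.InjOn (i - ·) (range k) := fun a ha b hb hab => by
    simp only [coe_range, Set.mem_Iio] at ha hb hab
    omega
  have hpartial : k * x i - ε * (k * (k - 1) / 2) ≤ C :=
    calc k * x i - ε * (k * (k - 1) / 2) = ∑ t ∈ range k, (x i - t * ε) := by
          rw [sum_sub_distrib, ← sum_mul, sum_range_natCast_id]
          simp only [sum_const, card_range, nsmul_eq_mul]
          ring
      _ ≤ ∑ t ∈ range k, x (i - t) := sum_le_sum hdrift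
      _ = ∑ j ∈ (range k).image (i - ·), x j := (sum_image fun a ha b hb => hinj ha hb).symm
      _ ≤ C := sum_le_hasSum _ (fun j _ => hnn j) hsum
  rw [← sub_le_iff_le_add, le_div_iff₀ (by exact_mod_cast hk₀)]
  linarith

theorem div_add_mul_sub_one_div_two_le_sqrt {C ε k : ℝ} (hC : 0 ≤ C) (hε : 0 < ε) (hk : 0 < k)
    (hlow : √(2 * C * ε) ≤ ε * k) (hup : ε * (k - 1) ≤ √(2 * C * ε)) :
    C / k + ε * (k - 1) / 2 ≤ √(2 * C * ε) := by
  set Q := √(2 * C * ε)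
  have hQ : 0 ≤ Q := Real.sqrt_nonneg _
  have hQsq : Q ^ 2 = 2 * C * ε := Real.sq_sqrt (by positivity)
  have hε2C : ε * (2 * C) ≤ ε * (Q * k) :=
    calc ε * (2 * C) = Q * Q := by rw [← sq, hQsq]; ring
      _ ≤ Q * (ε * k) := mul_le_mul_of_nonneg_left hlow hQ
      _ = ε * (Q * k) := by ring
  have h2C : 2 * C ≤ Q * k := le_of_mul_le_mul_left hε2C hε
  have hCk : C / k ≤ Q / 2 := by
    rw [div_le_iff₀ hk]
    linarith
  linarith

/-- Lemma: infinite sequence bound. -/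
theorem infinite_sequence_bound (ε : ℝ) (hε : 0 < ε) (x : ℕ → ℝ) (C : ℝ)
    (hnn : ∀ i, 0 ≤ x i) (hsum : HasSum x C) (hstep : ∀ i, x (i + 1) ≤ x i + ε) :
    ∀ i, x i ≤ C / ((i : ℝ) + 1) + Real.sqrt (2 * C * ε) + ε := by
  intro i
  have hC : 0 ≤ C := hsum.nonneg hnn
  set Q := √(2 * C * ε)
  have hQ : 0 ≤ Q := Real.sqrt_nonneg _
  have hCi : 0 ≤ C / ((i : ℝ) + 1) := by positivity
  by_cases hi : ε * i ≤ Q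
  · have h := le_div_add_of_hasSum hnn hsum hstep i.succ_pos le_rfl
    push_cast at h
    linarith
  · set k := ⌊Q / ε⌋₊ + 1
    have hki : k ≤ i + 1 := by
      have : ⌊Q / ε⌋₊ < i := (Nat.floor_lt (by positivity)).2 ((div_lt_iff₀' hε).2 (not_le.1 hi))
      omega
    have hlow : Q ≤ ε * k := by
      have := Nat.lt_floor_add_one (Q / ε)
      rw [div_lt_iff₀' hε] at this
      push_cast [k]
      linarith
    have hup : ε * ((k : ℝ) - 1) ≤ Q := by
      have := Nat.floor_le (div_nonneg hQ hε.le)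
      rw [le_div_iff₀' hε] at this
      push_cast [k]
      linarith
    have h := le_div_add_of_hasSum hnn hsum hstep (by simp [k]) hki
    have := div_add_mul_sub_one_div_two_le_sqrt hC hε (by positivity) hlow hup
    linarith
end
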